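/- arXiv:1606.01856 — 2 statements merged into one kernel-verified Lean document; each statement's English description precedes it below -/
import Mathlib

section
/- Let (X_i)_{i≥1} be the stages of the discrete self-similar fractal generated by the Sierpinski triangle generator G = {(0,0),(1,0),(0,1)}. Then for every i ≥ 1, X_i = {(x,y) ∈ ℕ² | x + y < 2^i and the bitwise AND of x and y equals 0}. -/
/-- Two lattice points are adjacent iff they are at Euclidean distance 1
(i.e. they differ by exactly 1 in exactly one coordinate). -/
def adjPt (p q : ℕ × ℕ) : Prop :=
  (p.1 = q.1 ∧ (p.2 + 1 = q.2 ∨ q.2 + 1 = p.2)) ∨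
  (p.2 = q.2 ∧ (p.1 + 1 = q.1 ∨ q.1 + 1 = p.1))

/-- The graph with vertex set `S` and an edge between any two points at
Euclidean distance 1. -/
def gridGraph (S : Set (ℕ × ℕ)) : SimpleGraph S where
  Adj p q := adjPt p.1 q.1
  symm := by
    refine ⟨?_⟩
    rintro ⟨p, hp⟩ ⟨q, hq⟩ (⟨h1, h2⟩ | ⟨h1, h2⟩)
    · exact Or.inl ⟨h1.symm, h2.symm⟩
    · exact Or.inr ⟨h1.symm, h2.symm⟩
  loopless := by
    refine ⟨?_⟩
    rintro ⟨p, hp⟩ (⟨_, h | h⟩ | ⟨_, h | h⟩) <;> omega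

/-- A set `S ⊆ ℕ²` is connected if its grid graph is connected. -/
def IsConnectedSet (S : Set (ℕ × ℕ)) : Prop := (gridGraph S).Connected

/-- `wG G = max{x | (x,y) ∈ G} + 1`. -/
noncomputable def wG (G : Set (ℕ × ℕ)) : ℕ := sSup ((fun p => p.1) '' G) + 1

/-- `hG G = max{y | (x,y) ∈ G} + 1`. -/
noncomputable def hG (G : Set (ℕ × ℕ)) : ℕ := sSup ((fun p => p.2) '' G) + 1

/-- The rectangle `{0,…,w−1} × {0,…,h−1}`. -/
def gridBox (w h : ℕ) : Set (ℕ × ℕ) := {p | p.1 < w ∧ p.2 < h}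

/-- `G` is a generator of a discrete self-similar fractal. -/
structure IsGenerator (G : Set (ℕ × ℕ)) : Prop where
  finite : G.Finite
  zero_mem : (0, 0) ∈ G
  connected : IsConnectedSet G
  one_lt_w : 1 < wG G
  one_lt_h : 1 < hG G
  ssubset_box : G ⊂ gridBox (wG G) (hG G)

/-- The stages of the discrete self-similar fractal generated by `G`:
`X_1 = G` and `X_{i+1} = X_i + (wG^i, hG^i)·G`.  (`stage G 0` is unused.) -/
noncomputable def stage (G : Set (ℕ × ℕ)) : ℕ → Set (ℕ × ℕ)
  | 0 => ∅
  | 1 => G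
  | (i + 2) => {p | ∃ a ∈ stage G (i + 1), ∃ b ∈ G,
      p = (a.1 + wG G ^ (i + 1) * b.1, a.2 + hG G ^ (i + 1) * b.2)}

/-- The discrete self-similar fractal `F = ⋃_{i ≥ 1} X_i` generated by `G`. -/
noncomputable def fractal (G : Set (ℕ × ℕ)) : Set (ℕ × ℕ) := ⋃ i : ℕ, stage G (i + 1)

/-- The generator of the Sierpinski triangle: `{(0,0),(1,0),(0,1)}`. -/
def sierpGen : Set (ℕ × ℕ) := {(0, 0), (1, 0), (0, 1)}

/-! Write `T n` for the set of `(x, y)` with `x + y < 2 ^ n` and `x &&& y = 0`. Since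
`w_G = h_G = 2`, the stages obey `X (n + 1) = X n ∪ (X n + (2 ^ n, 0)) ∪ (X n + (0, 2 ^ n))`, and
`T` obeys the same recursion: a point of `T (n + 1)` has at most one coordinate `≥ 2 ^ n`, and
removing that top bit does not change the `AND` because the other coordinate is `< 2 ^ n`; if both
coordinates are `< 2 ^ n`, disjoint bits give `x + y = x ||| y < 2 ^ n`. -/

theorem Nat.add_eq_or_of_and_eq_zero {x y : ℕ} (h : x &&& y = 0) : x + y = x ||| y := by
  induction x using Nat.binaryRec generalizing y with
  | zero => simp
  | bit a x ih =>
    obtain ⟨b, y, rfl⟩ : ∃ b y', y = Nat.bit b y' :=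
      ⟨_, _, (Nat.bit_testBit_zero_shiftRight_one y).symm⟩
    rw [Nat.land_bit, Nat.bit_eq_zero_iff] at h
    rw [Nat.lor_bit, Nat.bit_val, Nat.bit_val, Nat.bit_val, ← ih h.1]
    cases a <;> cases b <;> simp at h ⊢ <;> omega

theorem Nat.add_two_pow_and_of_lt {x y n : ℕ} (hy : y < 2 ^ n) :
    (x + 2 ^ n) &&& y = x &&& y :=
  calc (x + 2 ^ n) &&& y = ((x + 2 ^ n) &&& y) % 2 ^ n :=
        (Nat.mod_eq_of_lt (Nat.and_lt_two_pow _ hy)).symm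
    _ = (x &&& y) % 2 ^ n := by rw [Nat.and_mod_two_pow, Nat.and_mod_two_pow, Nat.add_mod_right]
    _ = x &&& y := Nat.mod_eq_of_lt (Nat.and_lt_two_pow _ hy)

theorem stage_succ (G : Set (ℕ × ℕ)) {i : ℕ} (hi : 1 ≤ i) :
    stage G (i + 1) =
      ⋃ b ∈ G, (fun a : ℕ × ℕ => (a.1 + wG G ^ i * b.1, a.2 + hG G ^ i * b.2)) '' stage G i := by
  obtain ⟨j, rfl⟩ := Nat.exists_eq_add_of_le' hi
  ext p
  simp only [stage, Set.mem_ofPred_eq, Set.mem_iUnion, Set.mem_image, exists_prop]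
  constructor
  · rintro ⟨a, ha, b, hb, rfl⟩; exact ⟨b, hb, a, ha, rfl⟩
  · rintro ⟨b, hb, a, ha, rfl⟩; exact ⟨a, ha, b, hb, rfl⟩

theorem wG_sierpGen : wG sierpGen = 2 := by
  simp [wG, sierpGen, Set.image_insert_eq, csSup_insert]

theorem hG_sierpGen : hG sierpGen = 2 := by
  simp [hG, sierpGen, Set.image_insert_eq, csSup_insert]

theorem stage_sierpGen_succ {i : ℕ} (hi : 1 ≤ i) :
    stage sierpGen (i + 1) = stage sierpGen i ∪
      (fun p : ℕ × ℕ => (p.1 + 2 ^ i, p.2)) '' stage sierpGen i ∪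
      (fun p : ℕ × ℕ => (p.1, p.2 + 2 ^ i)) '' stage sierpGen i := by
  rw [stage_succ _ hi, wG_sierpGen, hG_sierpGen]
  simp [sierpGen, Set.union_assoc]

def sierpinskiTriangle (n : ℕ) : Set (ℕ × ℕ) := {p | p.1 + p.2 < 2 ^ n ∧ p.1 &&& p.2 = 0}

theorem sierpinskiTriangle_mono : Monotone sierpinskiTriangle :=
  fun _ _ hmn _ ⟨hsum, hand⟩ => ⟨hsum.trans_le (Nat.pow_le_pow_right two_pos hmn), hand⟩

theorem swap_mem_sierpinskiTriangle_iff {n x y : ℕ} :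
    (y, x) ∈ sierpinskiTriangle n ↔ (x, y) ∈ sierpinskiTriangle n := by
  simp only [sierpinskiTriangle, Set.mem_ofPred_eq, add_comm y, Nat.land_comm y]

theorem add_two_pow_mem_sierpinskiTriangle_succ_iff {n x y : ℕ} :
    (x + 2 ^ n, y) ∈ sierpinskiTriangle (n + 1) ↔ (x, y) ∈ sierpinskiTriangle n := by
  simp only [sierpinskiTriangle, Set.mem_ofPred_eq, pow_succ]
  constructor
  · rintro ⟨hsum, hand⟩
    exact ⟨by omega, (Nat.add_two_pow_and_of_lt (by omega)).symm.trans hand⟩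
  · rintro ⟨hsum, hand⟩
    exact ⟨by omega, (Nat.add_two_pow_and_of_lt (by omega)).trans hand⟩

theorem mem_sierpinskiTriangle_of_lt {n x y : ℕ} (hx : x < 2 ^ n) (hy : y < 2 ^ n)
    (h : (x, y) ∈ sierpinskiTriangle (n + 1)) : (x, y) ∈ sierpinskiTriangle n :=
  ⟨Nat.add_eq_or_of_and_eq_zero h.2 ▸ Nat.or_lt_two_pow hx hy, h.2⟩

theorem sierpinskiTriangle_succ (n : ℕ) :
    sierpinskiTriangle (n + 1) = sierpinskiTriangle n ∪
      (fun p : ℕ × ℕ => (p.1 + 2 ^ n, p.2)) '' sierpinskiTriangle n ∪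
      (fun p : ℕ × ℕ => (p.1, p.2 + 2 ^ n)) '' sierpinskiTriangle n := by
  ext ⟨x, y⟩
  simp only [Set.mem_union, Set.mem_image, Prod.exists, Prod.mk.injEq]
  constructor
  · intro hp
    rcases le_or_gt (2 ^ n) x with hx | hx
    · obtain ⟨x, rfl⟩ := Nat.exists_eq_add_of_le' hx
      exact .inl (.inr ⟨x, y, add_two_pow_mem_sierpinskiTriangle_succ_iff.mp hp, rfl, rfl⟩)
    rcases le_or_gt (2 ^ n) y with hy | hy
    · obtain ⟨y, rfl⟩ := Nat.exists_eq_add_of_le' hy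
      have hp' := add_two_pow_mem_sierpinskiTriangle_succ_iff.mp
        (swap_mem_sierpinskiTriangle_iff.mpr hp)
      exact .inr ⟨x, y, swap_mem_sierpinskiTriangle_iff.mp hp', rfl, rfl⟩
    exact .inl (.inl (mem_sierpinskiTriangle_of_lt hx hy hp))
  · rintro ((hp | ⟨x, y, hp, rfl, rfl⟩) | ⟨x, y, hp, rfl, rfl⟩)
    · exact sierpinskiTriangle_mono n.le_succ hp
    · exact add_two_pow_mem_sierpinskiTriangle_succ_iff.mpr hp
    · exact swap_mem_sierpinskiTriangle_iff.mp
        (add_two_pow_mem_sierpinskiTriangle_succ_iff.mpr (swap_mem_sierpinskiTriangle_iff.mpr hp))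

theorem sierpinskiTriangle_one : sierpinskiTriangle 1 = sierpGen := by
  ext ⟨x, y⟩
  simp only [sierpinskiTriangle, sierpGen, Set.mem_ofPred_eq, Set.mem_insert_iff,
    Set.mem_singleton_iff, Prod.mk.injEq, pow_one]
  constructor
  · rintro ⟨hsum, hand⟩
    have hx : x < 2 := by omega
    have hy : y < 2 := by omega
    interval_cases x <;> interval_cases y <;> simp_all
  · rintro (⟨rfl, rfl⟩ | ⟨rfl, rfl⟩ | ⟨rfl, rfl⟩) <;> decide

/-- for the Sierpinski triangle generator, for every `i ≥ 1`,
`X_i = {(x,y) | x + y < 2^i and x AND y = 0}`. -/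
theorem sierpinski_stage_eq (i : ℕ) (hi : 1 ≤ i) :
    stage sierpGen i =
      {p : ℕ × ℕ | p.1 + p.2 < 2 ^ i ∧ Nat.land p.1 p.2 = 0} := by
  show stage sierpGen i = sierpinskiTriangle i
  induction i, hi using Nat.le_induction with
  | base => exact sierpinskiTriangle_one.symm
  | succ n hn ih => rw [stage_sierpGen_succ hn, ih, sierpinskiTriangle_succ]
end

section
/- Let S_Δ = ⋃_{i≥1} X_i be the discrete Sierpinski triangle, i.e. the discrete self-similar fractal generated by G = {(0,0),(1,0),(0,1)}. Then S_Δ = {(x,y) ∈ ℕ² | the bitwise AND of x and y equals 0}. -/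
namespace Nat

theorem land_eq_zero_iff_mod_two_pow_and_div_two_pow (x y n : ℕ) :
    x &&& y = 0 ↔ x % 2 ^ n &&& y % 2 ^ n = 0 ∧ x / 2 ^ n &&& y / 2 ^ n = 0 := by
  rw [← and_mod_two_pow, ← and_div_two_pow]
  constructor
  · intro h
    simp [h]
  · rintro ⟨hmod, hdiv⟩
    rw [← Nat.mod_add_div (x &&& y) (2 ^ n), hmod, hdiv, Nat.mul_zero]

end Nat

section Stage

variable {G : Set (ℕ × ℕ)}

theorem stage_one : stage G 1 = G := rfl

theorem wG_pos : 0 < wG G := Nat.succ_pos _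

theorem hG_pos : 0 < hG G := Nat.succ_pos _

theorem subset_gridBox_of_finite (hfin : G.Finite) : G ⊆ gridBox (wG G) (hG G) := fun _ hp =>
  ⟨Nat.lt_succ_of_le (le_csSup ((hfin.image _).bddAbove) (Set.mem_image_of_mem _ hp)),
    Nat.lt_succ_of_le (le_csSup ((hfin.image _).bddAbove) (Set.mem_image_of_mem _ hp))⟩

theorem stage_subset_gridBox (hbox : G ⊆ gridBox (wG G) (hG G)) (i : ℕ) :
    stage G (i + 1) ⊆ gridBox (wG G ^ (i + 1)) (hG G ^ (i + 1)) := by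
  induction i with
  | zero => simpa [stage_one] using hbox
  | succ i ih =>
    rintro _ ⟨a, ha, b, hb, rfl⟩
    obtain ⟨ha₁, ha₂⟩ := ih ha
    obtain ⟨hb₁, hb₂⟩ := hbox hb
    constructor
    · calc a.1 + wG G ^ (i + 1) * b.1 < wG G ^ (i + 1) * (b.1 + 1) := by linarith
        _ ≤ wG G ^ (i + 1 + 1) := by rw [pow_succ]; exact Nat.mul_le_mul_left _ hb₁
    · calc a.2 + hG G ^ (i + 1) * b.2 < hG G ^ (i + 1) * (b.2 + 1) := by linarith
        _ ≤ hG G ^ (i + 1 + 1) := by rw [pow_succ]; exact Nat.mul_le_mul_left _ hb₂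

theorem mem_stage_succ_succ_iff (hbox : G ⊆ gridBox (wG G) (hG G)) (i : ℕ) (p : ℕ × ℕ) :
    p ∈ stage G (i + 2) ↔
      (p.1 % wG G ^ (i + 1), p.2 % hG G ^ (i + 1)) ∈ stage G (i + 1) ∧
        (p.1 / wG G ^ (i + 1), p.2 / hG G ^ (i + 1)) ∈ G := by
  have hw : 0 < wG G ^ (i + 1) := pow_pos wG_pos _
  have hh : 0 < hG G ^ (i + 1) := pow_pos hG_pos _
  constructor
  · rintro ⟨a, ha, b, hb, rfl⟩
    obtain ⟨ha₁, ha₂⟩ := stage_subset_gridBox hbox i ha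
    simpa [Nat.add_mul_mod_self_left, Nat.add_mul_div_left, Nat.mod_eq_of_lt, Nat.div_eq_of_lt,
      ha₁, ha₂, hw, hh] using And.intro ha hb
  · rintro ⟨ha, hb⟩
    exact ⟨_, ha, _, hb, by simp [Nat.mod_add_div]⟩

end Stage

theorem sierpGen_finite : sierpGen.Finite :=
  ((Set.finite_singleton _).insert _).insert _

theorem mem_sierpGen_iff (p : ℕ × ℕ) : p ∈ sierpGen ↔ p.1 < 2 ∧ p.2 < 2 ∧ p.1 &&& p.2 = 0 := by
  obtain ⟨x, y⟩ := p
  constructor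
  · rintro (h | h | h) <;> simp_all
  · rintro ⟨hx, hy, h⟩
    interval_cases x <;> interval_cases y <;> simp_all [sierpGen]

theorem stage_sierpGen (i : ℕ) :
    stage sierpGen (i + 1) = {p | p.1 < 2 ^ (i + 1) ∧ p.2 < 2 ^ (i + 1) ∧ p.1 &&& p.2 = 0} := by
  induction i with
  | zero => ext p; simpa [stage_one] using mem_sierpGen_iff p
  | succ i ih =>
    ext p
    rw [mem_stage_succ_succ_iff (subset_gridBox_of_finite sierpGen_finite), ih,
      mem_sierpGen_iff, wG_sierpGen, hG_sierpGen, Set.mem_ofPred_eq, Set.mem_ofPred_eq,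
      Nat.land_eq_zero_iff_mod_two_pow_and_div_two_pow p.1 p.2 (i + 1)]
    have hpos : 0 < 2 ^ (i + 1) := pow_pos two_pos _
    simp only [Nat.mod_lt _ hpos, true_and, Nat.div_lt_iff_lt_mul hpos, ← pow_succ']
    tauto

/-- the discrete Sierpinski triangle is
`{(x,y) | x AND y = 0}`. -/
theorem sierpinski_fractal_eq :
    fractal sierpGen = {p : ℕ × ℕ | Nat.land p.1 p.2 = 0} := by
  ext ⟨x, y⟩
  simp only [fractal, Set.mem_iUnion, stage_sierpGen, Set.mem_ofPred_eq]
  refine ⟨fun ⟨_, _, _, h⟩ => h, fun h => ⟨x + y, ?_, ?_, h⟩⟩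
  · exact (Nat.lt_two_pow_self).trans_le (Nat.pow_le_pow_right two_pos (by omega))
  · exact (Nat.lt_two_pow_self).trans_le (Nat.pow_le_pow_right two_pos (by omega))
end
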